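/- Let u_1 and u_2 be smooth plurisubharmonic functions on a neighborhood V of the origin in C^n with u_1(0) = u_2(0) = 0, and suppose H_{u_1}(z; s) ≥ H_{u_2}(z; s) for all z ∈ V and all s ∈ C^n. Suppose there exist a neighborhood U with compact closure contained in V, a constant C > 0, and a parameter ε with 0 < ε ≤ 1/2, such that for each sufficiently small δ > 0 there is a smooth ρ_δ : U → R with 0 ≤ ρ_δ ≤ 1 on U and H_{u_2/δ + ρ_δ}(z; s) ≥ C·δ^{-2ε}·|s|² for all z ∈ U, s ∈ C^n. For k = 1, 2 let r_k(z, z_{n+1}) = 2·Re(z_{n+1}) + u_k(z). Then for each k ∈ {1, 2} there exist constants C'_k > 0 and C''_k > 0 such that for every sufficiently small δ > 0 there is a smooth plurisubharmonic function λ^{(k)}_δ on U × C with |λ^{(k)}_δ(z')| ≤ C'_k for all z' ∈ U × C with r_k(z') < δ, and H_{λ^{(k)}_δ}(z'; t) ≥ C''_k·δ^{-2ε}·|t|² for all z' ∈ U × C with −δ < r_k(z') ≤ 0 and all t ∈ C^{n+1}. -/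

import Mathlib

open scoped BigOperators

set_option maxHeartbeats 1000000

noncomputable section

abbrev Cn (n : ℕ) := EuclideanSpace ℂ (Fin n)

/-- Complex Hessian (Levi form) of a real-valued function on a complex normed space:
`H_f(z; s) = (1/4)(D²f(z)[s,s] + D²f(z)[I•s, I•s]) = Σ_{i,j} f_{z_i z̄_j}(z) s_i s̄_j`. -/
noncomputable def levi {E : Type*} [NormedAddCommGroup E] [NormedSpace ℂ E]
    (f : E → ℝ) (z s : E) : ℝ :=
  (1 / 4) * (iteratedFDeriv ℝ 2 f z ![s, s]
    + iteratedFDeriv ℝ 2 f z ![Complex.I • s, Complex.I • s])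

/-- Plurisubharmonic on a set: smooth there with positive semidefinite complex Hessian. -/
def PSHOn {E : Type*} [NormedAddCommGroup E] [NormedSpace ℂ E]
    (f : E → ℝ) (V : Set E) : Prop :=
  ContDiffOn ℝ (⊤ : ℕ∞) f V ∧ ∀ z ∈ V, ∀ s : E, 0 ≤ levi f z s

/-- Projection `C^{n+1} → C^n` onto the first `n` coordinates. -/
def proj (n : ℕ) (w : Cn (n + 1)) : Cn n := WithLp.toLp 2 (fun i : Fin n => w i.castSucc)

/-- Defining function `r(z, z_{n+1}) = 2 Re z_{n+1} + u(z)` of the rigid domain. -/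
def rfun (n : ℕ) (u : Cn n → ℝ) (w : Cn (n + 1)) : ℝ :=
  2 * (w (Fin.last n)).re + u (proj n w)

/-- Catlin's sufficient condition of order ε for the rigid domain with mixed term `u`:
a uniformly bounded family of plurisubharmonic functions on `U × ℂ` whose complex
Hessians are at least `C'' δ^{-2ε}` times the identity on the strip `{-δ < r ≤ 0}`. -/
def CatlinFamily (n : ℕ) (U : Set (Cn n)) (u : Cn n → ℝ) (ε : ℝ) : Prop :=
  ∃ C' > (0 : ℝ), ∃ C'' > (0 : ℝ), ∃ δ₁ > (0 : ℝ), ∀ δ : ℝ, 0 < δ → δ < δ₁ →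
    ∃ lam : Cn (n + 1) → ℝ,
      PSHOn lam {w : Cn (n + 1) | proj n w ∈ U} ∧
      (∀ w : Cn (n + 1), proj n w ∈ U → rfun n u w < δ → |lam w| ≤ C') ∧
      (∀ w : Cn (n + 1), proj n w ∈ U → -δ < rfun n u w → rfun n u w ≤ 0 →
        ∀ t : Cn (n + 1), C'' * δ ^ (-(2 * ε)) * ‖t‖ ^ 2 ≤ levi lam w t)


/-! ### Auxiliary calculus for the Levi form -/

section LeviCalc

variable {E : Type*} [NormedAddCommGroup E] [NormedSpace ℂ E]
variable {E' : Type*} [NormedAddCommGroup E'] [NormedSpace ℂ E']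

/-- Local second-order derivative data for a real-valued function. -/
def HasD2 (f : E → ℝ) (z : E) (f' : E → (E →L[ℝ] ℝ)) (Q : E →L[ℝ] (E →L[ℝ] ℝ)) : Prop :=
  (∀ᶠ x in nhds z, HasFDerivAt f (f' x) x) ∧ HasFDerivAt f' Q z

theorem HasD2.iteratedFDeriv_two {f : E → ℝ} {z : E} {f' : E → (E →L[ℝ] ℝ)}
    {Q : E →L[ℝ] (E →L[ℝ] ℝ)} (h : HasD2 f z f' Q) (s t : E) :
    iteratedFDeriv ℝ 2 f z ![s, t] = Q s t := by
  have h1 : fderiv ℝ f =ᶠ[nhds z] f' := h.1.mono fun x hx => hx.fderiv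
  have h2 : fderiv ℝ (fderiv ℝ f) z = Q := by rw [h1.fderiv_eq, h.2.fderiv]
  rw [iteratedFDeriv_two_apply, h2]
  simp

theorem HasD2.levi_eq {f : E → ℝ} {z : E} {f' : E → (E →L[ℝ] ℝ)}
    {Q : E →L[ℝ] (E →L[ℝ] ℝ)} (h : HasD2 f z f' Q) (s : E) :
    levi f z s = (1 / 4) * (Q s s + Q (Complex.I • s) (Complex.I • s)) := by
  simp only [levi, h.iteratedFDeriv_two]

theorem HasD2.add {f g : E → ℝ} {z : E} {f' g' : E → (E →L[ℝ] ℝ)}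
    {Qf Qg : E →L[ℝ] (E →L[ℝ] ℝ)} (hf : HasD2 f z f' Qf) (hg : HasD2 g z g' Qg) :
    HasD2 (fun x => f x + g x) z (fun x => f' x + g' x) (Qf + Qg) := by
  constructor
  · filter_upwards [hf.1, hg.1] with x h1 h2; exact h1.add h2
  · exact hf.2.add hg.2

theorem HasD2.const_mul {f : E → ℝ} {z : E} {f' : E → (E →L[ℝ] ℝ)}
    {Q : E →L[ℝ] (E →L[ℝ] ℝ)} (h : HasD2 f z f' Q) (c : ℝ) :
    HasD2 (fun x => c * f x) z (fun x => c • f' x) (c • Q) := by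
  constructor
  · filter_upwards [h.1] with x hx
    exact hx.const_mul c
  · exact h.2.const_smul c

theorem HasD2.const_add {f : E → ℝ} {z : E} {f' : E → (E →L[ℝ] ℝ)}
    {Q : E →L[ℝ] (E →L[ℝ] ℝ)} (h : HasD2 f z f' Q) (c : ℝ) :
    HasD2 (fun x => c + f x) z f' Q :=
  ⟨h.1.mono fun _ hx => hx.const_add c, h.2⟩

theorem HasD2.clm (L : E →L[ℝ] ℝ) (z : E) :
    HasD2 (fun x => L x) z (fun _ => L) 0 :=
  ⟨Filter.Eventually.of_forall fun _ => L.hasFDerivAt, hasFDerivAt_const L z⟩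

theorem HasD2.exp {f : E → ℝ} {z : E} {f' : E → (E →L[ℝ] ℝ)}
    {Q : E →L[ℝ] (E →L[ℝ] ℝ)} (h : HasD2 f z f' Q) :
    HasD2 (fun x => Real.exp (f x)) z (fun x => Real.exp (f x) • f' x)
      (Real.exp (f z) • Q + (Real.exp (f z) • f' z).smulRight (f' z)) := by
  constructor
  · filter_upwards [h.1] with x hx; exact hx.exp
  · have h0 : HasFDerivAt f (f' z) z := h.1.self_of_nhds
    exact h0.exp.smul h.2

theorem HasD2.comp_clm {f : E' → ℝ} {f' : E' → (E' →L[ℝ] ℝ)}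
    {Q : E' →L[ℝ] (E' →L[ℝ] ℝ)} {P : E →L[ℝ] E'} {z : E} (h : HasD2 f (P z) f' Q) :
    HasD2 (fun x => f (P x)) z (fun x => (f' (P x)).comp P)
      (((ContinuousLinearMap.compL ℝ E E' ℝ).flip P).comp (Q.comp P)) := by
  constructor
  · have hev : ∀ᶠ x in nhds z, HasFDerivAt f (f' (P x)) (P x) :=
      (P.continuous.tendsto z).eventually h.1
    filter_upwards [hev] with x hx
    exact hx.comp x P.hasFDerivAt
  · have hinner : HasFDerivAt (fun x => f' (P x)) (Q.comp P) z :=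
      h.2.comp z P.hasFDerivAt
    have houter := (((ContinuousLinearMap.compL ℝ E E' ℝ).flip P).hasFDerivAt).comp z hinner
    exact houter

theorem levi_add {f g : E → ℝ} {z : E} {f' g' : E → (E →L[ℝ] ℝ)}
    {Qf Qg : E →L[ℝ] (E →L[ℝ] ℝ)} (hf : HasD2 f z f' Qf) (hg : HasD2 g z g' Qg) (s : E) :
    levi (fun x => f x + g x) z s = levi f z s + levi g z s := by
  rw [(hf.add hg).levi_eq, hf.levi_eq, hg.levi_eq]
  simp only [ContinuousLinearMap.add_apply]
  ring

theorem levi_const_mul {f : E → ℝ} {z : E} {f' : E → (E →L[ℝ] ℝ)}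
    {Q : E →L[ℝ] (E →L[ℝ] ℝ)} (h : HasD2 f z f' Q) (c : ℝ) (s : E) :
    levi (fun x => c * f x) z s = c * levi f z s := by
  rw [(h.const_mul c).levi_eq, h.levi_eq]
  simp only [ContinuousLinearMap.smul_apply, ContinuousLinearMap.coe_smul', Pi.smul_apply,
    smul_eq_mul]
  ring

theorem hasD2_of_contDiffOn {O : Set E} (hO : IsOpen O) {f : E → ℝ}
    (hf : ContDiffOn ℝ (⊤ : ℕ∞) f O) {z : E} (hz : z ∈ O) :
    HasD2 f z (fderiv ℝ f) (fderiv ℝ (fderiv ℝ f) z) := by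
  constructor
  · filter_upwards [hO.mem_nhds hz] with x hx
    exact ((hf.contDiffAt (hO.mem_nhds hx)).differentiableAt (by simp)).hasFDerivAt
  · have h1 : ContDiffAt ℝ 1 (fderiv ℝ f) z :=
      (hf.contDiffAt (hO.mem_nhds hz)).fderiv_right (WithTop.coe_le_coe.mpr le_top)
    exact (h1.differentiableAt one_ne_zero).hasFDerivAt

end LeviCalc

/-! ### Concrete linear maps on `Cn` -/

/-- The projection as a `ℂ`-continuous-linear map. -/
def projL (n : ℕ) : Cn (n + 1) →L[ℂ] Cn n :=
  LinearMap.toContinuousLinearMap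
    { toFun := proj n
      map_add' := fun _ _ => rfl
      map_smul' := fun _ _ => rfl }

/-- The projection as an `ℝ`-continuous-linear map. -/
def projR (n : ℕ) : Cn (n + 1) →L[ℝ] Cn n := (projL n).restrictScalars ℝ

@[simp] theorem projR_apply (n : ℕ) (w : Cn (n + 1)) : projR n w = proj n w := rfl

theorem projR_smul_I (n : ℕ) (v : Cn (n + 1)) :
    projR n (Complex.I • v) = Complex.I • projR n v := rfl

/-- `w ↦ 2 Re (w (Fin.last n))` as an `ℝ`-continuous-linear map. -/
def lastL (n : ℕ) : Cn (n + 1) →L[ℝ] ℝ :=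
  (2 : ℝ) • (Complex.reCLM.comp
    ((EuclideanSpace.proj (Fin.last n) : Cn (n + 1) →L[ℂ] ℂ).restrictScalars ℝ))

theorem lastL_apply (n : ℕ) (w : Cn (n + 1)) :
    lastL n w = 2 * (w (Fin.last n)).re := rfl

theorem lastL_smul_I (n : ℕ) (w : Cn (n + 1)) :
    lastL n (Complex.I • w) = -2 * (w (Fin.last n)).im := by
  have h : (Complex.I • w) (Fin.last n) = Complex.I * w (Fin.last n) := rfl
  rw [lastL_apply, h]
  simp [Complex.mul_re]

theorem rfun_eq (n : ℕ) (u : Cn n → ℝ) (w : Cn (n + 1)) :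
    rfun n u w = lastL n w + u (projR n w) := rfl

theorem norm_sq_eq' (m : ℕ) (x : Cn m) : ‖x‖ ^ 2 = ∑ i, ‖x i‖ ^ 2 := by
  rw [EuclideanSpace.norm_eq, Real.sq_sqrt (Finset.sum_nonneg fun i _ => by positivity)]

theorem cnorm_sq (c : ℂ) : ‖c‖ ^ 2 = c.re ^ 2 + c.im ^ 2 := by
  rw [Complex.sq_norm, Complex.normSq_apply]; ring

theorem norm_split (n : ℕ) (t : Cn (n + 1)) :
    ‖t‖ ^ 2 = ‖projR n t‖ ^ 2 + ((t (Fin.last n)).re ^ 2 + (t (Fin.last n)).im ^ 2) := by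
  rw [norm_sq_eq', norm_sq_eq', Fin.sum_univ_castSucc, ← cnorm_sq]
  rfl

/-! ### The construction -/

/-- `F = r/δ + ρ ∘ proj`. -/
def Ffun (n : ℕ) (δ : ℝ) (u ρ : Cn n → ℝ) : Cn (n + 1) → ℝ :=
  fun w => δ⁻¹ * lastL n w + (δ⁻¹ * u (projR n w) + ρ (projR n w))

/-- `G = 1 + r/δ`. -/
def Gfun (n : ℕ) (δ : ℝ) (u : Cn n → ℝ) : Cn (n + 1) → ℝ :=
  fun w => 1 + (δ⁻¹ * lastL n w + δ⁻¹ * u (projR n w))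

/-- The member of the bounded plurisubharmonic family:
`λ_δ = exp(r/δ + ρ ∘ proj) + κ · exp(1 + r/δ)`. -/
def lamfun (n : ℕ) (δ κ : ℝ) (u ρ : Cn n → ℝ) : Cn (n + 1) → ℝ :=
  fun w => Real.exp (Ffun n δ u ρ w) + κ * Real.exp (Gfun n δ u w)

theorem Ffun_eq (n : ℕ) (δ : ℝ) (u ρ : Cn n → ℝ) (w : Cn (n + 1)) :
    Ffun n δ u ρ w = δ⁻¹ * rfun n u w + ρ (proj n w) := by
  simp only [Ffun, rfun_eq, projR_apply]; ring

theorem Gfun_eq (n : ℕ) (δ : ℝ) (u : Cn n → ℝ) (w : Cn (n + 1)) :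
    Gfun n δ u w = 1 + δ⁻¹ * rfun n u w := by
  simp only [Gfun, rfun_eq, projR_apply]; ring

theorem levi_div_add {n : ℕ} {V U : Set (Cn n)} (hV : IsOpen V) (hU : IsOpen U)
    {u ρ : Cn n → ℝ} (hu : ContDiffOn ℝ (⊤ : ℕ∞) u V) (hρ : ContDiffOn ℝ (⊤ : ℕ∞) ρ U)
    {z : Cn n} (hzV : z ∈ V) (hzU : z ∈ U) (δ : ℝ) (s : Cn n) :
    levi (fun w => u w / δ + ρ w) z s = δ⁻¹ * levi u z s + levi ρ z s := by
  have h1 : (fun w => u w / δ + ρ w) = (fun w => δ⁻¹ * u w + ρ w) := by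
    funext w; rw [div_eq_inv_mul]
  rw [h1, levi_add ((hasD2_of_contDiffOn hV hu hzV).const_mul δ⁻¹)
      (hasD2_of_contDiffOn hU hρ hzU),
    levi_const_mul (hasD2_of_contDiffOn hV hu hzV) δ⁻¹]

/-- The Levi form of `lamfun`, completely explicitly. -/
theorem levi_lam {n : ℕ} {δ κ : ℝ} {u ρ : Cn n → ℝ} {u' ρ' : Cn n → (Cn n →L[ℝ] ℝ)}
    {Qu Qρ : Cn n →L[ℝ] (Cn n →L[ℝ] ℝ)} {w : Cn (n + 1)}
    (hu : HasD2 u (projR n w) u' Qu) (hρ : HasD2 ρ (projR n w) ρ' Qρ) (t : Cn (n + 1)) :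
    levi (lamfun n δ κ u ρ) w t =
      Real.exp (Ffun n δ u ρ w) *
          (δ⁻¹ * levi u (projR n w) (projR n t) + levi ρ (projR n w) (projR n t))
        + Real.exp (Ffun n δ u ρ w) / 4 *
          ((δ⁻¹ * lastL n t
              + (δ⁻¹ * u' (projR n w) (projR n t) + ρ' (projR n w) (projR n t))) ^ 2
            + (δ⁻¹ * lastL n (Complex.I • t)
                + (δ⁻¹ * u' (projR n w) (projR n (Complex.I • t))
                    + ρ' (projR n w) (projR n (Complex.I • t)))) ^ 2)
        + κ * (Real.exp (Gfun n δ u w) * (δ⁻¹ * levi u (projR n w) (projR n t))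
            + Real.exp (Gfun n δ u w) / 4 *
              ((δ⁻¹ * lastL n t + δ⁻¹ * u' (projR n w) (projR n t)) ^ 2
                + (δ⁻¹ * lastL n (Complex.I • t)
                    + δ⁻¹ * u' (projR n w) (projR n (Complex.I • t))) ^ 2)) := by
  have h2F := (hu.const_mul δ⁻¹).add hρ
  have h2G := hu.const_mul δ⁻¹
  have hF := ((HasD2.clm (lastL n) w).const_mul δ⁻¹).add
    (h2F.comp_clm (P := projR n) (z := w))
  have hG := (((HasD2.clm (lastL n) w).const_mul δ⁻¹).add
    (h2G.comp_clm (P := projR n) (z := w))).const_add 1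
  have hlam := hF.exp.add (hG.exp.const_mul κ)
  refine Eq.trans (hlam.levi_eq t) ?_
  rw [hu.levi_eq (projR n t), hρ.levi_eq (projR n t)]
  simp only [Ffun, Gfun, ContinuousLinearMap.add_apply, ContinuousLinearMap.coe_add',
    Pi.add_apply, ContinuousLinearMap.smul_apply, ContinuousLinearMap.coe_smul',
    Pi.smul_apply, ContinuousLinearMap.comp_apply, ContinuousLinearMap.flip_apply,
    ContinuousLinearMap.compL_apply, ContinuousLinearMap.smulRight_apply,
    ContinuousLinearMap.zero_apply, smul_eq_mul, mul_zero, zero_mul, add_zero, zero_add,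
    projR_smul_I]
  ring

theorem lam_smooth (n : ℕ) (δ κ : ℝ) {u ρ : Cn n → ℝ} {U V : Set (Cn n)}
    (hUV : U ⊆ V) (hu : ContDiffOn ℝ (⊤ : ℕ∞) u V) (hρ : ContDiffOn ℝ (⊤ : ℕ∞) ρ U) :
    ContDiffOn ℝ (⊤ : ℕ∞) (lamfun n δ κ u ρ) {w : Cn (n + 1) | proj n w ∈ U} := by
  have hP : ContDiff ℝ (⊤ : ℕ∞) (fun w : Cn (n + 1) => projR n w) := (projR n).contDiff
  have hup : ContDiffOn ℝ (⊤ : ℕ∞) (fun w : Cn (n + 1) => u (projR n w))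
      {w : Cn (n + 1) | proj n w ∈ U} :=
    hu.comp hP.contDiffOn fun w hw => hUV hw
  have hρp : ContDiffOn ℝ (⊤ : ℕ∞) (fun w : Cn (n + 1) => ρ (projR n w))
      {w : Cn (n + 1) | proj n w ∈ U} :=
    hρ.comp hP.contDiffOn fun _ hw => hw
  have hl : ContDiffOn ℝ (⊤ : ℕ∞) (fun w : Cn (n + 1) => lastL n w)
      {w : Cn (n + 1) | proj n w ∈ U} := (lastL n).contDiff.contDiffOn
  have hF : ContDiffOn ℝ (⊤ : ℕ∞) (Ffun n δ u ρ) {w : Cn (n + 1) | proj n w ∈ U} :=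
    (contDiffOn_const.mul hl).add ((contDiffOn_const.mul hup).add hρp)
  have hG : ContDiffOn ℝ (⊤ : ℕ∞) (Gfun n δ u) {w : Cn (n + 1) | proj n w ∈ U} :=
    contDiffOn_const.add ((contDiffOn_const.mul hl).add (contDiffOn_const.mul hup))
  exact (Real.contDiff_exp.comp_contDiffOn hF).add
    (contDiffOn_const.mul (Real.contDiff_exp.comp_contDiffOn hG))

private theorem aux_nonneg {E₁ E₂ B Y SF SG κ : ℝ} (hE₁ : 0 < E₁) (hE₂ : 0 < E₂)
    (hB : 0 ≤ B) (hY : 0 ≤ Y) (hSF : 0 ≤ SF) (hSG : 0 ≤ SG) (hκ : 0 ≤ κ) :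
    0 ≤ E₁ * B + E₁ / 4 * SF + κ * (E₂ * Y + E₂ / 4 * SG) := by
  have h1 := mul_nonneg hE₁.le hB
  have h2 := mul_nonneg (by linarith : (0:ℝ) ≤ E₁ / 4) hSF
  have h3 := mul_nonneg hκ (add_nonneg (mul_nonneg hE₂.le hY)
    (mul_nonneg (by linarith : (0:ℝ) ≤ E₂ / 4) hSG))
  linarith

private theorem aux_strip {C einv M κ C'' A' δi E₁ E₂ X R SF re im a b np nt : ℝ}
    (hC : 0 < C) (heinv : 0 < einv) (hE₁ : einv ≤ E₁) (hE₂ : 1 ≤ E₂)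
    (hB : C * A' * np ^ 2 ≤ δi * X + R) (hX : 0 ≤ X) (hSF : 0 ≤ SF)
    (hκ : 0 < κ) (hδi : 0 < δi) (hA' : 0 < A') (hA'δ : A' ≤ δi ^ 2)
    (ha : a ^ 2 ≤ M ^ 2 * np ^ 2) (hb : b ^ 2 ≤ M ^ 2 * np ^ 2)
    (hκM : κ * M ^ 2 ≤ C * einv)
    (hC''1 : C'' ≤ C * einv / 2) (hC''2 : C'' ≤ κ / 2)
    (hnt : nt = np ^ 2 + (re ^ 2 + im ^ 2)) :
    C'' * A' * nt ≤
      E₁ * (δi * X + R) + E₁ / 4 * SF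
        + κ * (E₂ * (δi * X) + E₂ / 4 *
            ((δi * (2 * re) + δi * a) ^ 2 + (δi * (-2 * im) + δi * b) ^ 2)) := by
  subst hnt
  have hnp2 : (0:ℝ) ≤ np ^ 2 := sq_nonneg np
  have hBnn : 0 ≤ δi * X + R :=
    le_trans (mul_nonneg (mul_nonneg hC.le hA'.le) hnp2) hB
  have hE₁pos : 0 < E₁ := lt_of_lt_of_le heinv hE₁
  set Qv : ℝ := (2 * re + a) ^ 2 + (-2 * im + b) ^ 2 with hQdef
  clear_value Qv
  have hQnn : 0 ≤ Qv := by rw [hQdef]; positivity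
  have h1 : einv * (C * A' * np ^ 2) ≤ E₁ * (δi * X + R) :=
    le_trans (mul_le_mul_of_nonneg_left hB heinv.le)
      (mul_le_mul_of_nonneg_right hE₁ hBnn)
  have hSG : (δi * (2 * re) + δi * a) ^ 2 + (δi * (-2 * im) + δi * b) ^ 2
      = δi ^ 2 * Qv := by rw [hQdef]; ring
  have h2 : A' * (2 * re ^ 2 + 2 * im ^ 2 - (a ^ 2 + b ^ 2)) ≤ A' * Qv := by
    apply mul_le_mul_of_nonneg_left _ hA'.le
    rw [hQdef]
    nlinarith [sq_nonneg (re + a), sq_nonneg (im - b)]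
  have h3 : A' * Qv ≤ δi ^ 2 * Qv := mul_le_mul_of_nonneg_right hA'δ hQnn
  have h4 : κ / 4 * (δi ^ 2 * Qv) ≤ κ * (E₂ / 4 * (δi ^ 2 * Qv)) := by
    have h5 : 0 ≤ κ * ((δi ^ 2 * Qv) * (E₂ - 1)) :=
      mul_nonneg hκ.le (mul_nonneg (mul_nonneg (sq_nonneg δi) hQnn) (by linarith))
    nlinarith [h5]
  have h6 : 0 ≤ κ * (E₂ * (δi * X)) :=
    mul_nonneg hκ.le (mul_nonneg (by linarith) (mul_nonneg hδi.le hX))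
  have h7 : 0 ≤ E₁ / 4 * SF := mul_nonneg (by linarith) hSF
  rw [hSG]
  have h8 : κ * (E₂ * (δi * X) + E₂ / 4 * (δi ^ 2 * Qv))
      = κ * (E₂ * (δi * X)) + κ * (E₂ / 4 * (δi ^ 2 * Qv)) := by ring
  have h9 : κ / 4 * (A' * (2 * re ^ 2 + 2 * im ^ 2 - (a ^ 2 + b ^ 2)))
      ≤ κ / 4 * (δi ^ 2 * Qv) :=
    mul_le_mul_of_nonneg_left (le_trans h2 h3) (by positivity)
  have h10 : C'' * A' * (np ^ 2 + (re ^ 2 + im ^ 2))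
      ≤ einv * (C * A' * np ^ 2)
        + κ / 4 * (A' * (2 * re ^ 2 + 2 * im ^ 2 - (a ^ 2 + b ^ 2))) := by
    have hab : a ^ 2 + b ^ 2 ≤ 2 * (M ^ 2 * np ^ 2) := by linarith
    have hrim : (0:ℝ) ≤ re ^ 2 + im ^ 2 := by positivity
    have k1 := mul_le_mul_of_nonneg_right hC''1 (mul_nonneg hA'.le hnp2)
    have k2 := mul_le_mul_of_nonneg_right hC''2 (mul_nonneg hA'.le hrim)
    have k3 := mul_le_mul_of_nonneg_right (sub_nonneg.mpr hκM) (mul_nonneg hA'.le hnp2)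
    have k4 := mul_le_mul_of_nonneg_left hab
      (mul_nonneg (by linarith : (0:ℝ) ≤ κ / 4) hA'.le)
    nlinarith [k1, k2, k3, k4]
  linarith [h1, h4, h6, h7, h9, h10, h8]

/-- The heart of the matter: Catlin's condition for a single `u`. -/
theorem key (n : ℕ) (V : Set (Cn n)) (hV : IsOpen V)
    (u : Cn n → ℝ) (hu : PSHOn u V)
    (U : Set (Cn n)) (hUo : IsOpen U)
    (hUV : closure U ⊆ V) (hUc : IsCompact (closure U))
    (C ε : ℝ) (hC : 0 < C) (hε : 0 < ε) (hε' : ε ≤ 1 / 2)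
    (δ₀ : ℝ) (hδ₀ : 0 < δ₀)
    (hres : ∀ δ : ℝ, 0 < δ → δ < δ₀ →
      ∃ ρ : Cn n → ℝ, ContDiffOn ℝ (⊤ : ℕ∞) ρ U ∧
        (∀ z ∈ U, 0 ≤ ρ z ∧ ρ z ≤ 1) ∧
        (∀ z ∈ U, ∀ s : Cn n,
          C * δ ^ (-(2 * ε)) * ‖s‖ ^ 2 ≤ levi (fun w => u w / δ + ρ w) z s)) :
    CatlinFamily n U u ε := by
  have hUV' : U ⊆ V := subset_closure.trans hUV
  obtain ⟨M₀, hM₀⟩ := hUc.exists_bound_of_continuousOn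
    ((hu.1.continuousOn_fderiv_of_isOpen hV (by simp)).mono hUV)
  set M : ℝ := max M₀ 0 with hMdef
  have hMnn : (0:ℝ) ≤ M := le_max_right _ _
  have hM : ∀ z ∈ closure U, ‖fderiv ℝ u z‖ ≤ M :=
    fun z hz => (hM₀ z hz).trans (le_max_left _ _)
  set e1 : ℝ := Real.exp 1 with he1def
  have he1 : 0 < e1 := Real.exp_pos 1
  have heinv : 0 < e1⁻¹ := inv_pos.mpr he1
  set κ : ℝ := min 1 (C / (e1 * (M ^ 2 + 1))) with hκdef
  have hκpos : 0 < κ := lt_min one_pos (div_pos hC (by positivity))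
  have hκ1 : κ ≤ 1 := min_le_left _ _
  have hκM : κ * M ^ 2 ≤ C * e1⁻¹ := by
    have h1 : κ ≤ C / (e1 * (M ^ 2 + 1)) := min_le_right _ _
    have h3 : κ * (e1 * (M ^ 2 + 1)) ≤ C := by
      rw [← le_div_iff₀ (by positivity)]
      exact h1
    rw [← div_eq_mul_inv, le_div_iff₀ he1]
    nlinarith [hκpos.le, hMnn, mul_pos hκpos he1]
  set Cdd : ℝ := min (C * e1⁻¹ / 2) (κ / 2) with hCdddef
  have hCddpos : 0 < Cdd := lt_min (by positivity) (by positivity)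
  have hCdd1 : Cdd ≤ C * e1⁻¹ / 2 := min_le_left _ _
  have hCdd2 : Cdd ≤ κ / 2 := min_le_right _ _
  clear_value Cdd κ e1 M
  refine ⟨2 * Real.exp 2, by positivity, Cdd, hCddpos, min δ₀ 1, lt_min hδ₀ one_pos, ?_⟩
  intro δ hδ hδ₁
  have hδδ₀ : δ < δ₀ := lt_of_lt_of_le hδ₁ (min_le_left _ _)
  have hδ1 : δ < 1 := lt_of_lt_of_le hδ₁ (min_le_right _ _)
  have hδinv : 0 < δ⁻¹ := inv_pos.mpr hδ
  obtain ⟨ρ, hρsm, hρbd, hρlevi⟩ := hres δ hδ hδδ₀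
  have hD2u : ∀ w : Cn (n + 1), proj n w ∈ U →
      HasD2 u (projR n w) (fderiv ℝ u) (fderiv ℝ (fderiv ℝ u) (projR n w)) :=
    fun w hw => hasD2_of_contDiffOn hV hu.1 (hUV' hw)
  have hD2ρ : ∀ w : Cn (n + 1), proj n w ∈ U →
      HasD2 ρ (projR n w) (fderiv ℝ ρ) (fderiv ℝ (fderiv ℝ ρ) (projR n w)) :=
    fun w hw => hasD2_of_contDiffOn hUo hρsm hw
  have hsplit : ∀ z ∈ U, ∀ s : Cn n,
      levi (fun w => u w / δ + ρ w) z s = δ⁻¹ * levi u z s + levi ρ z s :=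
    fun z hz s => levi_div_add hV hUo hu.1 hρsm (hUV' hz) hz δ s
  have hrpos : ∀ w : Cn (n + 1), -δ < rfun n u w → -1 < δ⁻¹ * rfun n u w := by
    intro w hr
    have h := mul_lt_mul_of_pos_left hr hδinv
    rw [mul_neg, inv_mul_cancel₀ hδ.ne'] at h
    linarith
  have hrlt : ∀ w : Cn (n + 1), rfun n u w < δ → δ⁻¹ * rfun n u w < 1 := by
    intro w hr
    have h := mul_lt_mul_of_pos_left hr hδinv
    rw [inv_mul_cancel₀ hδ.ne'] at h
    linarith
  have hA'pos : (0:ℝ) < δ ^ (-(2 * ε)) := Real.rpow_pos_of_pos hδ _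
  have hA'δ : δ ^ (-(2 * ε)) ≤ δ⁻¹ ^ 2 := by
    have h1 : δ ^ (-(2 * ε)) ≤ δ ^ (-2 : ℝ) :=
      Real.rpow_le_rpow_of_exponent_ge hδ hδ1.le (by linarith)
    have h2 : δ ^ (-2 : ℝ) = δ⁻¹ ^ 2 := by
      rw [Real.rpow_neg hδ.le, show ((2:ℝ)) = ((2:ℕ):ℝ) from by norm_num,
        Real.rpow_natCast, inv_pow]
    linarith
  refine ⟨lamfun n δ κ u ρ, ⟨lam_smooth n δ κ hUV' hu.1 hρsm, ?_⟩, ?_, ?_⟩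
  · -- plurisubharmonicity
    intro w hw t
    have hw' : projR n w ∈ U := hw
    rw [levi_lam (hD2u w hw') (hD2ρ w hw') t]
    have hX : 0 ≤ levi u (projR n w) (projR n t) := hu.2 _ (hUV' hw') _
    have hB : 0 ≤ δ⁻¹ * levi u (projR n w) (projR n t)
        + levi ρ (projR n w) (projR n t) := by
      have h := hρlevi _ hw' (projR n t)
      rw [hsplit _ hw'] at h
      have h0 : 0 ≤ C * δ ^ (-(2 * ε)) * ‖projR n t‖ ^ 2 := by positivity
      linarith
    exact aux_nonneg (Real.exp_pos _) (Real.exp_pos _) hB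
      (mul_nonneg hδinv.le hX) (by positivity) (by positivity) hκpos.le
  · -- boundedness
    intro w hw hr
    have hFw : Ffun n δ u ρ w ≤ 2 := by
      rw [Ffun_eq]
      have h1 := hrlt w hr
      have h2 := (hρbd _ hw).2
      linarith
    have hGw : Gfun n δ u w ≤ 2 := by
      rw [Gfun_eq]
      have h1 := hrlt w hr
      linarith
    have hpos : 0 < lamfun n δ κ u ρ w := by
      have := Real.exp_pos (Ffun n δ u ρ w)
      have := Real.exp_pos (Gfun n δ u w)
      have := mul_pos hκpos (Real.exp_pos (Gfun n δ u w))
      unfold lamfun; linarith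
    rw [abs_of_pos hpos]
    have b1 : Real.exp (Ffun n δ u ρ w) ≤ Real.exp 2 := Real.exp_le_exp.mpr hFw
    have b2 : κ * Real.exp (Gfun n δ u w) ≤ 1 * Real.exp 2 :=
      mul_le_mul hκ1 (Real.exp_le_exp.mpr hGw) (Real.exp_pos _).le one_pos.le
    unfold lamfun; linarith
  · -- the Hessian estimate on the strip
    intro w hw hr1 hr2 t
    have hw' : projR n w ∈ U := hw
    rw [levi_lam (hD2u w hw') (hD2ρ w hw') t, lastL_apply n t, lastL_smul_I n t,
      projR_smul_I n t]
    have hE₁ : e1⁻¹ ≤ Real.exp (Ffun n δ u ρ w) := by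
      have h1 : -1 ≤ Ffun n δ u ρ w := by
        rw [Ffun_eq]
        have := hrpos w hr1
        have := (hρbd _ hw).1
        linarith
      calc e1⁻¹ = Real.exp (-1) := by rw [he1def, ← Real.exp_neg]
        _ ≤ Real.exp (Ffun n δ u ρ w) := Real.exp_le_exp.mpr h1
    have hE₂ : 1 ≤ Real.exp (Gfun n δ u w) := by
      have h1 : 0 ≤ Gfun n δ u w := by
        rw [Gfun_eq]
        have := hrpos w hr1
        linarith
      calc (1:ℝ) = Real.exp 0 := Real.exp_zero.symm
        _ ≤ Real.exp (Gfun n δ u w) := Real.exp_le_exp.mpr h1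
    have hB : C * δ ^ (-(2 * ε)) * ‖projR n t‖ ^ 2
        ≤ δ⁻¹ * levi u (projR n w) (projR n t) + levi ρ (projR n w) (projR n t) := by
      have h := hρlevi _ hw' (projR n t)
      rwa [hsplit _ hw'] at h
    have hX : 0 ≤ levi u (projR n w) (projR n t) := hu.2 _ (hUV' hw') _
    have hMz : ‖fderiv ℝ u (projR n w)‖ ≤ M := hM _ (subset_closure hw')
    have ha : (fderiv ℝ u (projR n w) (projR n t)) ^ 2 ≤ M ^ 2 * ‖projR n t‖ ^ 2 := by
      have h1 : ‖fderiv ℝ u (projR n w) (projR n t)‖ ≤ M * ‖projR n t‖ :=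
        le_trans ((fderiv ℝ u (projR n w)).le_opNorm _)
          (mul_le_mul_of_nonneg_right hMz (norm_nonneg _))
      have h2 : (fderiv ℝ u (projR n w) (projR n t)) ^ 2
          = ‖fderiv ℝ u (projR n w) (projR n t)‖ ^ 2 := by
        rw [Real.norm_eq_abs, sq_abs]
      rw [h2]
      nlinarith [norm_nonneg (fderiv ℝ u (projR n w) (projR n t)), norm_nonneg (projR n t)]
    have hb : (fderiv ℝ u (projR n w) (Complex.I • projR n t)) ^ 2
        ≤ M ^ 2 * ‖projR n t‖ ^ 2 := by
      have hn : ‖Complex.I • projR n t‖ = ‖projR n t‖ := by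
        rw [norm_smul, Complex.norm_I, one_mul]
      have h1 : ‖fderiv ℝ u (projR n w) (Complex.I • projR n t)‖ ≤ M * ‖projR n t‖ := by
        refine le_trans ((fderiv ℝ u (projR n w)).le_opNorm _) ?_
        rw [hn]
        exact mul_le_mul_of_nonneg_right hMz (norm_nonneg _)
      have h2 : (fderiv ℝ u (projR n w) (Complex.I • projR n t)) ^ 2
          = ‖fderiv ℝ u (projR n w) (Complex.I • projR n t)‖ ^ 2 := by
        rw [Real.norm_eq_abs, sq_abs]
      rw [h2]
      nlinarith [norm_nonneg (fderiv ℝ u (projR n w) (Complex.I • projR n t)),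
        norm_nonneg (projR n t)]
    exact aux_strip hC heinv hE₁ hE₂ hB hX (by positivity) hκpos hδinv hA'pos hA'δ ha hb hκM
      hCdd1 hCdd2 (norm_split n t)

/-- monotonicity of subelliptic estimates (Theorem 1 of the paper). -/
theorem monotonicity (n : ℕ) (V : Set (Cn n)) (hV : IsOpen V) (h0V : (0 : Cn n) ∈ V)
    (u₁ u₂ : Cn n → ℝ) (hu₁ : PSHOn u₁ V) (hu₂ : PSHOn u₂ V)
    (hu₁0 : u₁ 0 = 0) (hu₂0 : u₂ 0 = 0)
    (hmono : ∀ z ∈ V, ∀ s : Cn n, levi u₂ z s ≤ levi u₁ z s)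
    (U : Set (Cn n)) (hUo : IsOpen U) (h0U : (0 : Cn n) ∈ U)
    (hUV : closure U ⊆ V) (hUc : IsCompact (closure U))
    (C ε : ℝ) (hC : 0 < C) (hε : 0 < ε) (hε' : ε ≤ 1 / 2)
    (hres : ∃ δ₀ > (0 : ℝ), ∀ δ : ℝ, 0 < δ → δ < δ₀ →
      ∃ ρ : Cn n → ℝ, ContDiffOn ℝ (⊤ : ℕ∞) ρ U ∧
        (∀ z ∈ U, 0 ≤ ρ z ∧ ρ z ≤ 1) ∧
        (∀ z ∈ U, ∀ s : Cn n,
          C * δ ^ (-(2 * ε)) * ‖s‖ ^ 2 ≤ levi (fun w => u₂ w / δ + ρ w) z s)) :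
    CatlinFamily n U u₁ ε ∧ CatlinFamily n U u₂ ε := by
  obtain ⟨δ₀, hδ₀, hres'⟩ := hres
  have hUV' : U ⊆ V := subset_closure.trans hUV
  constructor
  · apply key n V hV u₁ hu₁ U hUo hUV hUc C ε hC hε hε' δ₀ hδ₀
    intro δ hδ hδ'
    obtain ⟨ρ, h1, h2, h3⟩ := hres' δ hδ hδ'
    refine ⟨ρ, h1, h2, fun z hz s => ?_⟩
    have hzV : z ∈ V := hUV' hz
    have e2 := levi_div_add hV hUo hu₂.1 h1 hzV hz δ s
    have e1 := levi_div_add hV hUo hu₁.1 h1 hzV hz δ s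
    have hm : δ⁻¹ * levi u₂ z s ≤ δ⁻¹ * levi u₁ z s :=
      mul_le_mul_of_nonneg_left (hmono z hzV s) (inv_nonneg.mpr hδ.le)
    have h4 := h3 z hz s
    rw [e2] at h4
    rw [e1]
    linarith
  · exact key n V hV u₂ hu₂ U hUo hUV hUc C ε hC hε hε' δ₀ hδ₀ hres'


end
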